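/- arXiv:1601.06064 — 5 statements merged into one kernel-verified Lean document; each statement's English description precedes it below -/
import Mathlib

section
/- For every integer K ≥ 2 and every z in the ordered simplex ∇_K, one has ∑_{l=1}^K (1−z_l)^K ≥ (K/2)·e^{−2}. -/
open Finset

/-- The function `r(u)`: `r(u) = (1-u)(1-(1-u)^K)/u` for `u > 0`, `r(0) = K`. -/
noncomputable def rfun (K : ℕ) (u : ℝ) : ℝ :=
  if u = 0 then (K : ℝ) else (1 - u) * (1 - (1 - u) ^ K) / u

/-- The simplex `Δ_K`. -/
def DeltaK (K : ℕ) : Set (Fin K → ℝ) :=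
  {z | (∀ i, 0 ≤ z i) ∧ ∑ i, z i = 1}

/-- The ordered simplex `∇_K`. -/
def NablaK (K : ℕ) : Set (Fin K → ℝ) :=
  {z | z ∈ DeltaK K ∧ ∀ i j : Fin K, i ≤ j → z j ≤ z i}

/-- The mainland frequencies `p_i(z)`. -/
noncomputable def pfun (K : ℕ) (z : Fin K → ℝ) (i : Fin K) : ℝ :=
  (1 - z i) ^ K / ∑ l, (1 - z l) ^ K

/-- The drift coefficients `b_i(z)`. -/
noncomputable def bdrift (K : ℕ) (α θ : ℝ) (z : Fin K → ℝ) (i : Fin K) : ℝ :=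
  (1 / 2) * ((θ + α) * (1 - z i) / ((K : ℝ) - 1) - (θ + α) * z i
    + α * pfun K z i * (∑ j, z j * rfun K (z j)) - α * z i * rfun K (z i))

/-- The power sum `φ_m(z) = ∑_{i=1}^K z_i^m` (real exponent). -/
noncomputable def phiK (K : ℕ) (m : ℝ) (z : Fin K → ℝ) : ℝ := ∑ i, z i ^ m

/-- The generator applied to the power sum `φ_m`:
`B_K φ_m(z) = (m(m-1)/2) ∑ z_i^{m-1}(1-z_i) + m ∑ b_i(z) z_i^{m-1}`. -/
noncomputable def BKphi (K : ℕ) (α θ : ℝ) (m : ℝ) (z : Fin K → ℝ) : ℝ :=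
  (m * (m - 1) / 2) * ∑ i, z i ^ (m - 1) * (1 - z i)
    + m * ∑ i, bdrift K α θ z i * z i ^ (m - 1)

/-!
Since `∑ (1 - z_l) = K - 1`, the power-mean inequality gives
`∑ (1 - z_l)^K ≥ K (1 - 1/K)^K`, and `(1 - 1/K)^K ≥ e^{-2}` for `K ≥ 2`
because `1 - x ≥ e^{-2x}` on `[0, 1/2]`.
-/

open Real

lemma exp_neg_two_mul_le_one_sub {x : ℝ} (hx₀ : 0 ≤ x) (hx : x ≤ 1 / 2) :
    exp (-(2 * x)) ≤ 1 - x := by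
  rw [exp_neg, inv_le_iff_one_le_mul₀ (exp_pos _)]
  nlinarith [add_one_le_exp (2 * x)]

lemma exp_neg_two_le_one_sub_inv_pow {n : ℕ} (hn : 2 ≤ n) :
    exp (-2) ≤ (1 - (n : ℝ)⁻¹) ^ n := by
  have hn' : (2 : ℝ) ≤ n := by exact_mod_cast hn
  have hexp : exp (-2) = exp (-(2 * (n : ℝ)⁻¹)) ^ n := by
    rw [← exp_nat_mul]
    field_simp
  rw [hexp]
  refine pow_le_pow_left₀ (exp_pos _).le (exp_neg_two_mul_le_one_sub ?_ ?_) n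
  · positivity
  · rw [inv_le_comm₀ (by positivity) (by norm_num)]
    linarith

lemma card_mul_one_sub_inv_pow_le_sum_one_sub_pow {K : ℕ} {z : Fin K → ℝ}
    (hz : z ∈ DeltaK K) : K * (1 - (K : ℝ)⁻¹) ^ K ≤ ∑ l, (1 - z l) ^ K := by
  obtain ⟨hz₀, hz₁⟩ := hz
  cases K with
  | zero => simp
  | succ n =>
    have hsum : ∑ l, (1 - z l) = n := by
      rw [sum_sub_distrib, hz₁]
      simp
    have hle : ∀ l ∈ univ, 0 ≤ 1 - z l := fun l _ => by
      linarith [single_le_sum (fun j _ => hz₀ j) (mem_univ l)]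
    have hpowmean := pow_sum_div_card_le_sum_pow hle n
    rw [hsum, card_univ, Fintype.card_fin] at hpowmean
    refine le_trans (le_of_eq ?_) hpowmean
    have hfrac : 1 - ((n : ℝ) + 1)⁻¹ = n / (n + 1) := by field_simp; ring
    push_cast
    rw [hfrac, div_pow, pow_succ ((n : ℝ) + 1)]
    field_simp

/-- For every integer `K ≥ 2` and every `z` in the ordered simplex `∇_K`,
one has `∑_{l=1}^K (1-z_l)^K ≥ (K/2)·e^{-2}`. -/
theorem stmt2 (K : ℕ) (hK : 2 ≤ K) :
    ∀ z ∈ NablaK K, (K : ℝ) / 2 * Real.exp (-2) ≤ ∑ l, (1 - z l) ^ K := by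
  intro z hz
  calc (K : ℝ) / 2 * exp (-2) ≤ K * exp (-2) := by
        gcongr
        linarith
    _ ≤ K * (1 - (K : ℝ)⁻¹) ^ K := by
        gcongr
        exact exp_neg_two_le_one_sub_inv_pow hK
    _ ≤ ∑ l, (1 - z l) ^ K := card_mul_one_sub_inv_pow_le_sum_one_sub_pow hz.1
end

section
/- For every integer K ≥ 2 and every z ∈ ∇_K, one has ∑_{j=1}^K z_j r_j(z) ≤ K, and consequently (∑_{j=1}^K z_j r_j(z)) / (∑_{l=1}^K (1−z_l)^K) ≤ 2e². -/
open Finset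

/-!
Each summand `z_j r_j(z) = (1 - z_j)(1 - (1 - z_j)^K)` is at most `1 - z_j ≤ 1` and (by Bernoulli) at
most `K z_j`; the bound by `1` gives `∑ z_j r_j ≤ K`. For the ratio, the denominator is
bounded below through `(1 - u)^K ≥ e^{-2Ku} ≥ e^{-2}(3 - 2Ku)` for `u ≤ 1/2`. If every coordinate is
at most `1/2`, summing over all `K` coordinates gives `∑ (1 - z_l)^K ≥ K e^{-2}`. Otherwise the largest
coordinate exceeds `1/2`, the remaining mass `s = 1 - max z` is at most `1/2`, the numerator is at most
`s + K s ≤ (K + 1)/2`, and summing over the other `K - 1` coordinates gives a denominator of at least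
`(K - 1) e^{-2}`.
-/

open Real

lemma mul_rfun (K : ℕ) (u : ℝ) : u * rfun K u = (1 - u) * (1 - (1 - u) ^ K) := by
  rcases eq_or_ne u 0 with rfl | hu
  · simp
  · rw [rfun, if_neg hu]
    field_simp

lemma mul_rfun_le_one_sub (K : ℕ) {u : ℝ} (h1 : u ≤ 1) :
    u * rfun K u ≤ 1 - u := by
  rw [mul_rfun]
  have : 0 ≤ (1 - u) ^ K := pow_nonneg (by linarith) K
  nlinarith

lemma mul_rfun_le_mul (K : ℕ) {u : ℝ} (h0 : 0 ≤ u) (h1 : u ≤ 1) :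
    u * rfun K u ≤ K * u := by
  rw [mul_rfun]
  have hbern : 1 - K * u ≤ (1 - u) ^ K := by
    simpa [sub_eq_add_neg] using one_add_mul_le_pow (show (-2 : ℝ) ≤ -u by linarith) K
  have hle : (1 - u) ^ K ≤ 1 := pow_le_one₀ (by linarith) (by linarith)
  nlinarith

lemma exp_neg_two_mul_le_one_sub_s3 {u : ℝ} (h0 : 0 ≤ u) (h : u ≤ 1 / 2) :
    exp (-(2 * u)) ≤ 1 - u := by
  rw [exp_neg, inv_le_iff_one_le_mul₀ (exp_pos _)]
  have := add_one_le_exp (2 * u)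
  nlinarith

/-- The left side is the tangent line of `exp` at `-2`, evaluated at `-2Ku`. -/
lemma exp_neg_two_mul_le_one_sub_pow (K : ℕ) {u : ℝ} (h0 : 0 ≤ u) (h : u ≤ 1 / 2) :
    exp (-2) * (3 - 2 * K * u) ≤ (1 - u) ^ K :=
  calc exp (-2) * (3 - 2 * K * u)
      ≤ exp (-2) * exp (2 - 2 * K * u) := by
        gcongr
        linarith [add_one_le_exp (2 - 2 * K * u)]
    _ = exp (-(2 * u)) ^ K := by
        rw [← exp_add, ← exp_nat_mul]
        ring_nf
    _ ≤ (1 - u) ^ K := by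
        gcongr
        exact exp_neg_two_mul_le_one_sub_s3 h0 h

lemma card_mul_exp_neg_two_le_sum_one_sub_pow {ι : Type*} (s : Finset ι) (u : ι → ℝ) (K : ℕ)
    (hu : ∀ i ∈ s, 0 ≤ u i ∧ u i ≤ 1 / 2) (hsum : K * ∑ i ∈ s, u i ≤ #s) :
    #s * exp (-2) ≤ ∑ i ∈ s, (1 - u i) ^ K :=
  calc (#s : ℝ) * exp (-2)
      ≤ exp (-2) * (3 * #s - 2 * (K * ∑ i ∈ s, u i)) := by
        nlinarith [exp_pos (-2)]
    _ = ∑ i ∈ s, exp (-2) * (3 - 2 * K * u i) := by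
        rw [← mul_sum, sum_sub_distrib, sum_const, nsmul_eq_mul, ← mul_sum]
        ring
    _ ≤ ∑ i ∈ s, (1 - u i) ^ K :=
        sum_le_sum fun i hi => exp_neg_two_mul_le_one_sub_pow K (hu i hi).1 (hu i hi).2

lemma div_le_two_mul_exp_two_of_le {N D m : ℝ} (hm : 0 < m) (hN : N ≤ 2 * m)
    (hD : m * exp (-2) ≤ D) : N / D ≤ 2 * exp 2 := by
  have hD0 : 0 < D := lt_of_lt_of_le (by positivity) hD
  rw [div_le_iff₀ hD0]
  calc N ≤ 2 * m := hN
    _ = 2 * exp 2 * (m * exp (-2)) := by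
        have : exp 2 * exp (-2) = 1 := by rw [← exp_add]; norm_num
        linear_combination -2 * m * this
    _ ≤ 2 * exp 2 * D := by gcongr

lemma le_one_of_mem_DeltaK {K : ℕ} {z : Fin K → ℝ} (hz : z ∈ DeltaK K) (i : Fin K) : z i ≤ 1 :=
  hz.2 ▸ single_le_sum (fun j _ => hz.1 j) (mem_univ i)

lemma sum_mul_rfun_le {K : ℕ} {z : Fin K → ℝ} (hz : z ∈ DeltaK K) :
    ∑ j, z j * rfun K (z j) ≤ K :=
  calc ∑ j, z j * rfun K (z j) ≤ ∑ _j : Fin K, (1 : ℝ) :=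
        sum_le_sum fun j _ => by
          linarith [mul_rfun_le_one_sub K (le_one_of_mem_DeltaK hz j), hz.1 j]
    _ = K := by simp

lemma sum_mul_rfun_div_le {K : ℕ} (hK : 2 ≤ K) {z : Fin K → ℝ} (hz : z ∈ DeltaK K) :
    (∑ j, z j * rfun K (z j)) / (∑ l, (1 - z l) ^ K) ≤ 2 * exp 2 := by
  have hK' : (2 : ℝ) ≤ K := by exact_mod_cast hK
  have hnn := hz.1
  have hle1 := le_one_of_mem_DeltaK hz
  obtain ⟨i₀, -, hmax⟩ := exists_max_image univ z ⟨⟨0, by omega⟩, mem_univ _⟩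
  by_cases hsmall : z i₀ ≤ 1 / 2
  · refine div_le_two_mul_exp_two_of_le (m := K) (by positivity)
      (by linarith [sum_mul_rfun_le hz]) ?_
    simpa using card_mul_exp_neg_two_le_sum_one_sub_pow univ z K
      (fun i _ => ⟨hnn i, (hmax i (mem_univ i)).trans hsmall⟩) (by simp [hz.2])
  · set rest := univ.erase i₀
    have hrest : ∑ i ∈ rest, z i = 1 - z i₀ := by rw [sum_erase_eq_sub (mem_univ i₀), hz.2]
    have hcard : (#rest : ℝ) = K - 1 := by
      rw [card_erase_of_mem (mem_univ i₀), card_univ, Fintype.card_fin,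
        Nat.cast_sub (by omega), Nat.cast_one]
    have hnum : ∑ j, z j * rfun K (z j) ≤ (K + 1) * (1 - z i₀) := by
      rw [← add_sum_erase univ _ (mem_univ i₀)]
      have hi₀ := mul_rfun_le_one_sub K (hle1 i₀)
      have hothers : ∑ i ∈ rest, z i * rfun K (z i) ≤ ∑ i ∈ rest, K * z i :=
        sum_le_sum fun i _ => mul_rfun_le_mul K (hnn i) (hle1 i)
      rw [← mul_sum, hrest] at hothers
      linarith
    have hsmall_rest : ∀ i ∈ rest, 0 ≤ z i ∧ z i ≤ 1 / 2 := fun i hi =>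
      ⟨hnn i, by linarith [hrest ▸ single_le_sum (fun j _ => hnn j) hi]⟩
    have hden : ∑ i ∈ rest, (1 - z i) ^ K ≤ ∑ l, (1 - z l) ^ K :=
      sum_le_sum_of_subset_of_nonneg (subset_univ _) fun i _ _ =>
        pow_nonneg (by linarith [hle1 i]) K
    refine div_le_two_mul_exp_two_of_le (m := #rest) (by rw [hcard]; linarith)
      (by rw [hcard]; nlinarith) ?_
    exact (card_mul_exp_neg_two_le_sum_one_sub_pow rest z K hsmall_rest
      (by rw [hrest, hcard]; nlinarith)).trans hden

/-- For every integer `K ≥ 2` and every `z ∈ ∇_K`, one has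
`∑_{j=1}^K z_j r_j(z) ≤ K`, and consequently
`(∑_{j=1}^K z_j r_j(z)) / (∑_{l=1}^K (1-z_l)^K) ≤ 2e²`. -/
theorem stmt3 (K : ℕ) (hK : 2 ≤ K) :
    ∀ z ∈ NablaK K,
      (∑ j, z j * rfun K (z j)) ≤ (K : ℝ) ∧
      (∑ j, z j * rfun K (z j)) / (∑ l, (1 - z l) ^ K) ≤ 2 * Real.exp 2 :=
  fun _ hz => ⟨sum_mul_rfun_le hz.1, sum_mul_rfun_div_le hK hz.1⟩
end

section
/- For every real m ≥ 2 and every z ∈ ∇̄_∞, the series (1/2)∑_{i=1}^∞ z_i(1−z_i)·m(m−1)z_i^{m−2} − (1/2)∑_{i=1}^∞ (θ z_i + α)·m z_i^{m−1} (which is the operator B of the two-parameter model applied to φ_m, the mixed second partial derivatives of φ_m being zero) converges and equals (m(m−1)/2)(φ_{m−1}(z) − φ_m(z)) − (m/2)(θ φ_m(z) + α φ_{m−1}(z)). In particular, for m = 2 and every z ∈ ∇_∞ (where ∑_{i=1}^∞ z_i = 1), B φ_2(z) = 1 − α − (1+θ) φ_2(z). -/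
/-!
For `x ≥ 0` one has `x (1 - x) x^(m-2) = x^(m-1) - x^m` and `(θ x + α) x^(m-1) = θ x^m + α x^(m-1)`,
so both series are linear combinations of the power sums `∑ z_i^(m-1)` and `∑ z_i^m`, which
converge on the Kingman simplex because `z_i^p ≤ z_i` for `p ≥ 1`. For `m = 2` on `∇_∞`,
`φ_1 = ∑ z_i = 1`.
-/

open Finset

/-- The Kingman simplex `∇̄_∞` (coordinates indexed by `ℕ`). -/
def KingmanSimplex : Set (ℕ → ℝ) :=
  {z | (∀ i, 0 ≤ z i) ∧ (∀ i, z i ≤ 1) ∧ (∀ i j : ℕ, i ≤ j → z j ≤ z i) ∧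
       Summable z ∧ ∑' i, z i ≤ 1}

/-- The power sum `φ_m(z) = ∑_{i=1}^∞ z_i^m` (real exponent). -/
noncomputable def phiInf (m : ℝ) (z : ℕ → ℝ) : ℝ := ∑' i, z i ^ m

namespace Real

lemma rpow_eq_rpow_sub_one_mul {x p : ℝ} (hx : 0 ≤ x) (hp : p ≠ 0) :
    x ^ p = x ^ (p - 1) * x := by
  simpa using rpow_add_one' hx (y := p - 1) (by simpa using hp)

lemma half_mul_one_sub_mul_rpow_sub_two {x : ℝ} (hx : 0 ≤ x) (m : ℝ) :
    1 / 2 * (x * (1 - x)) * (m * (m - 1) * x ^ (m - 2))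
      = m * (m - 1) / 2 * (x ^ (m - 1) - x ^ m) := by
  rcases eq_or_ne m 0 with rfl | hm0
  · simp
  rcases eq_or_ne (m - 1) 0 with hm1 | hm1
  · simp [hm1]
  have hm2 : m - 1 - 1 = m - 2 := by ring
  rw [rpow_eq_rpow_sub_one_mul hx hm0, rpow_eq_rpow_sub_one_mul hx hm1, hm2]
  ring

lemma half_mul_affine_mul_rpow_sub_one {x : ℝ} (hx : 0 ≤ x) (α θ m : ℝ) :
    1 / 2 * (θ * x + α) * (m * x ^ (m - 1)) = m / 2 * (θ * x ^ m + α * x ^ (m - 1)) := by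
  rcases eq_or_ne m 0 with rfl | hm0
  · simp
  rw [rpow_eq_rpow_sub_one_mul hx hm0]
  ring

end Real

lemma Summable.rpow_of_le_one {z : ℕ → ℝ} (hz : Summable z) (h0 : ∀ i, 0 ≤ z i)
    (h1 : ∀ i, z i ≤ 1) {p : ℝ} (hp : 1 ≤ p) : Summable fun i => z i ^ p :=
  hz.of_nonneg_of_le (fun i => Real.rpow_nonneg (h0 i) p)
    (fun i => Real.rpow_le_self_of_le_one (h0 i) (h1 i) hp)

lemma summable_rpow_of_mem_kingmanSimplex {z : ℕ → ℝ} (hz : z ∈ KingmanSimplex) {p : ℝ} (hp : 1 ≤ p) :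
    Summable fun i => z i ^ p :=
  hz.2.2.2.1.rpow_of_le_one hz.1 hz.2.1 hp

lemma generator_rpow_eq (α θ m : ℝ) {z : ℕ → ℝ} (h0 : ∀ i, 0 ≤ z i)
    (hs₁ : Summable fun i => z i ^ (m - 1)) (hs : Summable fun i => z i ^ m) :
    Summable (fun i : ℕ => (1 / 2) * (z i * (1 - z i)) * (m * (m - 1) * z i ^ (m - 2))) ∧
    Summable (fun i : ℕ => (1 / 2) * (θ * z i + α) * (m * z i ^ (m - 1))) ∧
    (∑' i : ℕ, (1 / 2) * (z i * (1 - z i)) * (m * (m - 1) * z i ^ (m - 2)))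
        - (∑' i : ℕ, (1 / 2) * (θ * z i + α) * (m * z i ^ (m - 1)))
      = (m * (m - 1) / 2) * (phiInf (m - 1) z - phiInf m z)
        - (m / 2) * (θ * phiInf m z + α * phiInf (m - 1) z) := by
  have hdiff := (hs₁.sub hs).mul_left (m * (m - 1) / 2)
  have hdrift := ((hs.mul_left θ).add (hs₁.mul_left α)).mul_left (m / 2)
  simp only [Real.half_mul_one_sub_mul_rpow_sub_two (h0 _),
    Real.half_mul_affine_mul_rpow_sub_one (h0 _)]
  refine ⟨hdiff, hdrift, ?_⟩
  rw [tsum_mul_left, tsum_mul_left, hs₁.tsum_sub hs, (hs.mul_left θ).tsum_add (hs₁.mul_left α),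
    tsum_mul_left, tsum_mul_left]
  rfl

theorem stmt7_general (α θ : ℝ) :
    (∀ (m : ℝ), 2 ≤ m → ∀ z ∈ KingmanSimplex,
      Summable (fun i : ℕ => (1 / 2) * (z i * (1 - z i)) * (m * (m - 1) * z i ^ (m - 2))) ∧
      Summable (fun i : ℕ => (1 / 2) * (θ * z i + α) * (m * z i ^ (m - 1))) ∧
      (∑' i : ℕ, (1 / 2) * (z i * (1 - z i)) * (m * (m - 1) * z i ^ (m - 2)))
          - (∑' i : ℕ, (1 / 2) * (θ * z i + α) * (m * z i ^ (m - 1)))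
        = (m * (m - 1) / 2) * (phiInf (m - 1) z - phiInf m z)
          - (m / 2) * (θ * phiInf m z + α * phiInf (m - 1) z)) ∧
    (∀ z ∈ KingmanSimplex, (∑' i, z i) = 1 →
      (∑' i : ℕ, (1 / 2) * (z i * (1 - z i)) * (2 * (2 - 1) * z i ^ ((2 : ℝ) - 2)))
          - (∑' i : ℕ, (1 / 2) * (θ * z i + α) * (2 * z i ^ ((2 : ℝ) - 1)))
        = 1 - α - (1 + θ) * phiInf 2 z) := by
  have generator_eq (m : ℝ) (hm : 2 ≤ m) (z : ℕ → ℝ) (hz : z ∈ KingmanSimplex) :=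
    generator_rpow_eq α θ m hz.1 (summable_rpow_of_mem_kingmanSimplex hz (by linarith))
      (summable_rpow_of_mem_kingmanSimplex hz (by linarith))
  refine ⟨generator_eq, fun z hz hsum => ?_⟩
  have hphi₁ : phiInf (2 - 1) z = 1 := by
    simpa [phiInf, show (2 : ℝ) - 1 = 1 by norm_num] using hsum
  rw [(generator_eq 2 le_rfl z hz).2.2, hphi₁]
  ring

/-- For every real `m ≥ 2` and every `z ∈ ∇̄_∞`, the two series defining
`B φ_m(z)` converge and their difference equals
`(m(m-1)/2)(φ_{m-1}(z) − φ_m(z)) − (m/2)(θφ_m(z) + αφ_{m-1}(z))`.  In particular,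
for `m = 2` and `z ∈ ∇_∞`, `B φ_2(z) = 1 − α − (1+θ)φ_2(z)`. -/
theorem stmt7 (α θ : ℝ) (hα0 : 0 ≤ α) (hα1 : α < 1) (hθ : -α < θ) :
    (∀ (m : ℝ), 2 ≤ m → ∀ z ∈ KingmanSimplex,
      Summable (fun i : ℕ => (1 / 2) * (z i * (1 - z i)) * (m * (m - 1) * z i ^ (m - 2))) ∧
      Summable (fun i : ℕ => (1 / 2) * (θ * z i + α) * (m * z i ^ (m - 1))) ∧
      (∑' i : ℕ, (1 / 2) * (z i * (1 - z i)) * (m * (m - 1) * z i ^ (m - 2)))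
          - (∑' i : ℕ, (1 / 2) * (θ * z i + α) * (m * z i ^ (m - 1)))
        = (m * (m - 1) / 2) * (phiInf (m - 1) z - phiInf m z)
          - (m / 2) * (θ * phiInf m z + α * phiInf (m - 1) z)) ∧
    (∀ z ∈ KingmanSimplex, (∑' i, z i) = 1 →
      (∑' i : ℕ, (1 / 2) * (z i * (1 - z i)) * (2 * (2 - 1) * z i ^ ((2 : ℝ) - 2)))
          - (∑' i : ℕ, (1 / 2) * (θ * z i + α) * (2 * z i ^ ((2 : ℝ) - 1)))
        = 1 - α - (1 + θ) * phiInf 2 z) :=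
  stmt7_general α θ
end

section
/- For every u ∈ [0,1], 1 − u − u·r(u) = (1−u)^{K+1}. Moreover, for every real m with 2 < m < 3, every integer K ≥ 2, and every z ∈ ∇_K, the remainder R_{K,m}(z) := ∑_{i=1}^K (1 − z_i − z_i r_i(z))·z_i·(1 − (m/2) z_i^{m−2}) + (∑_{j=1}^K z_j r_j(z))·∑_{i=1}^K p_i(z)·z_i·(1 − (m/2) z_i^{m−2}) satisfies R_{K,m}(z) ≥ −(1+2e²)/(2(K+1)). -/
open Finset

/-! For `u ∈ [0, 1]` the identity gives `u r(u) = 1 - u - (1 - u)^(K+1) ∈ [0, 1]`. The factor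
`φ(u) = u (1 - (m/2) u^(m-2))` is at least `-1/2` on `[0, 1]` and negative only for
`u > e^(-1/2) > 3/5`, so on the simplex it can be negative only at a largest coordinate `z₀`.
Both sums of the remainder are therefore bounded below by their `z₀`-term. When `φ(z₀) < 0`, the
weight `(1 - z₀)^(K+1) ≤ 2^-(K+1)` is small, and so is `p₀ ≤ ((1 - z₀)/z₀)^K / (K - 1)`, because
every other coordinate `z_l` satisfies `1 - z_l ≥ z₀`; Bernoulli's inequality turns these
geometric bounds into `O(1/K)`. -/

open Real

theorem Finset.single_le_sum_of_nonneg_of_ne {ι M : Type*} [Fintype ι]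
    [AddCommMonoid M] [PartialOrder M] [IsOrderedAddMonoid M] {f : ι → M} (i : ι)
    (hf : ∀ j, j ≠ i → 0 ≤ f j) : f i ≤ ∑ j, f j := by
  classical
  rw [← add_sum_erase _ _ (mem_univ i)]
  exact le_add_of_nonneg_right (sum_nonneg fun j hj => hf j (ne_of_mem_erase hj))

theorem inv_one_add_pow_le {a : ℝ} (ha : 0 ≤ a) (n : ℕ) : (1 + a)⁻¹ ^ n ≤ (1 + n * a)⁻¹ := by
  rw [inv_pow]
  exact inv_anti₀ (by positivity) (one_add_mul_le_pow (by linarith) n)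

theorem three_fifths_lt_exp_neg_half : (3 / 5 : ℝ) < exp (-(1 / 2)) := by
  have hsq : exp (1 / 2) * exp (1 / 2) = exp 1 := by rw [← exp_add]; norm_num
  have : exp (1 / 2) < 5 / 3 := by nlinarith [exp_one_lt_d9, exp_pos (1 / 2)]
  rw [exp_neg, lt_inv_comm₀ (by norm_num) (exp_pos _)]
  linarith

theorem one_sub_sub_mul_rfun (K : ℕ) (u : ℝ) : 1 - u - u * rfun K u = (1 - u) ^ (K + 1) := by
  unfold rfun
  split_ifs with hu
  · simp [hu]
  · field_simp
    ring

theorem mul_rfun_nonneg {K : ℕ} {u : ℝ} (hu0 : 0 ≤ u) (hu1 : u ≤ 1) : 0 ≤ u * rfun K u := by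
  have := one_sub_sub_mul_rfun K u
  have : (1 - u) ^ (K + 1) ≤ 1 - u := pow_le_of_le_one (by linarith) (by linarith) K.succ_ne_zero
  linarith

theorem mul_rfun_le_one {K : ℕ} {u : ℝ} (hu0 : 0 ≤ u) (hu1 : u ≤ 1) : u * rfun K u ≤ 1 := by
  have := one_sub_sub_mul_rfun K u
  have : 0 ≤ (1 - u) ^ (K + 1) := pow_nonneg (by linarith) _
  linarith

noncomputable def remainderFactor (m u : ℝ) : ℝ := u * (1 - m / 2 * u ^ (m - 2))

section remainderFactor

variable {m u : ℝ}

theorem neg_half_le_remainderFactor (hm2 : 2 ≤ m) (hm3 : m ≤ 3) (hu0 : 0 ≤ u) (hu1 : u ≤ 1) :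
    -(1 / 2) ≤ remainderFactor m u := by
  have : m / 2 * u ^ (m - 2) ≤ 3 / 2 := calc
    m / 2 * u ^ (m - 2) ≤ 3 / 2 * 1 :=
      mul_le_mul (by linarith) (rpow_le_one hu0 hu1 (by linarith)) (rpow_nonneg hu0 _)
        (by norm_num)
    _ = 3 / 2 := mul_one _
  unfold remainderFactor
  nlinarith

theorem remainderFactor_nonneg (hm2 : 2 ≤ m) (hu0 : 0 ≤ u) (hu : u ≤ exp (-(1 / 2))) :
    0 ≤ remainderFactor m u := by
  have hpow : u ^ (m - 2) ≤ exp (-((m - 2) / 2)) := calc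
    u ^ (m - 2) ≤ exp (-(1 / 2)) ^ (m - 2) := rpow_le_rpow hu0 hu (by linarith)
    _ = exp (-((m - 2) / 2)) := by rw [← exp_mul]; ring_nf
  -- `m / 2 = 1 + (m - 2) / 2 ≤ exp ((m - 2) / 2)`
  have hm : m / 2 ≤ exp ((m - 2) / 2) := by linarith [add_one_le_exp ((m - 2) / 2)]
  have : m / 2 * u ^ (m - 2) ≤ 1 := calc
    m / 2 * u ^ (m - 2) ≤ exp ((m - 2) / 2) * exp (-((m - 2) / 2)) :=
      mul_le_mul hm hpow (rpow_nonneg hu0 _) (exp_pos _).le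
    _ = 1 := by rw [← exp_add, add_neg_cancel, exp_zero]
  exact mul_nonneg hu0 (by linarith)

theorem three_fifths_lt_of_remainderFactor_neg (hm2 : 2 ≤ m) (hu0 : 0 ≤ u)
    (h : remainderFactor m u < 0) : 3 / 5 < u := by
  by_contra! hu
  exact h.not_ge (remainderFactor_nonneg hm2 hu0 (by linarith [three_fifths_lt_exp_neg_half]))

theorem neg_le_pow_mul_remainderFactor (hm2 : 2 ≤ m) (hm3 : m ≤ 3) (hu0 : 0 ≤ u) (hu1 : u ≤ 1)
    (K : ℕ) : -(1 / (2 * (K + 1))) ≤ (1 - u) ^ (K + 1) * remainderFactor m u := by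
  rcases le_or_gt 0 (remainderFactor m u) with h | h
  · exact (neg_nonpos.2 (by positivity)).trans (mul_nonneg (pow_nonneg (by linarith) _) h)
  have hu := three_fifths_lt_of_remainderFactor_neg hm2 hu0 h
  have hw : (1 - u) ^ (K + 1) ≤ 1 / (K + 1) := calc
    (1 - u) ^ (K + 1) ≤ ((1 : ℝ) + 1)⁻¹ ^ (K + 1) := pow_le_pow_left₀ (by linarith) (by linarith) _
    _ ≤ ((1 : ℝ) + (K + 1 : ℕ) * 1)⁻¹ := inv_one_add_pow_le zero_le_one _
    _ ≤ 1 / (K + 1) := by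
      rw [one_div]
      exact inv_anti₀ (by positivity) (by push_cast; linarith)
  calc -(1 / (2 * ((K : ℝ) + 1))) = 1 / (K + 1) * -(1 / 2) := by field_simp
    _ ≤ (1 - u) ^ (K + 1) * -(1 / 2) := mul_le_mul_of_nonpos_right hw (by norm_num)
    _ ≤ (1 - u) ^ (K + 1) * remainderFactor m u :=
      mul_le_mul_of_nonneg_left (neg_half_le_remainderFactor hm2 hm3 hu0 hu1)
        (pow_nonneg (by linarith) _)

end remainderFactor

namespace DeltaK

variable {K : ℕ} {z : Fin K → ℝ}

theorem le_one (hz : z ∈ DeltaK K) (i : Fin K) : z i ≤ 1 :=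
  hz.2 ▸ single_le_sum (fun j _ => hz.1 j) (mem_univ i)

theorem add_le_one (hz : z ∈ DeltaK K) {i j : Fin K} (hij : i ≠ j) : z i + z j ≤ 1 := by
  rw [← sum_pair hij, ← hz.2]
  exact sum_le_sum_of_subset_of_nonneg (subset_univ _) fun l _ _ => hz.1 l

theorem sum_mul_rfun_nonneg (hz : z ∈ DeltaK K) : 0 ≤ ∑ j, z j * rfun K (z j) :=
  sum_nonneg fun j _ => mul_rfun_nonneg (hz.1 j) (DeltaK.le_one hz j)

theorem sum_mul_rfun_le (hz : z ∈ DeltaK K) : ∑ j, z j * rfun K (z j) ≤ K := by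
  simpa using sum_le_card_nsmul univ _ 1 fun j _ => mul_rfun_le_one (hz.1 j) (DeltaK.le_one hz j)

theorem pfun_nonneg (hz : z ∈ DeltaK K) (i : Fin K) : 0 ≤ pfun K z i :=
  div_nonneg (pow_nonneg (by linarith [DeltaK.le_one hz i]) K)
    (sum_nonneg fun l _ => pow_nonneg (by linarith [DeltaK.le_one hz l]) K)

theorem sub_one_mul_pow_le_sum_pow (hz : z ∈ DeltaK K) (i : Fin K) :
    ((K : ℝ) - 1) * z i ^ K ≤ ∑ l, (1 - z l) ^ K := by
  have hcard : ((univ.erase i).card : ℝ) = K - 1 := by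
    rw [card_erase_of_mem (mem_univ i), card_univ, Fintype.card_fin,
      Nat.cast_sub (Nat.one_le_iff_ne_zero.2 (Fin.pos i).ne'), Nat.cast_one]
  have hrest := card_nsmul_le_sum (univ.erase i) (fun l => (1 - z l) ^ K) (z i ^ K)
    fun l hl => pow_le_pow_left₀ (hz.1 i)
      (by linarith [DeltaK.add_le_one hz (ne_of_mem_erase hl)]) K
  rw [nsmul_eq_mul, hcard] at hrest
  rw [← sum_erase_add _ _ (mem_univ i)]
  linarith [pow_nonneg (by linarith [DeltaK.le_one hz i] : 0 ≤ 1 - z i) K]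

theorem pfun_le (hz : z ∈ DeltaK K) (hK : 2 ≤ K) {i : Fin K} (hi : 0 < z i) :
    pfun K z i ≤ ((1 - z i) / z i) ^ K / (K - 1) := by
  have hK1 : (0 : ℝ) < K - 1 := by
    have : (2 : ℝ) ≤ K := by exact_mod_cast hK
    linarith
  rw [div_pow, div_div, mul_comm (z i ^ K)]
  exact div_le_div_of_nonneg_left (pow_nonneg (by linarith [DeltaK.le_one hz i]) K)
    (by positivity) (DeltaK.sub_one_mul_pow_le_sum_pow hz i)

theorem natCast_mul_pfun_le (hz : z ∈ DeltaK K) (hK : 2 ≤ K) {i : Fin K} (hi : 3 / 5 ≤ z i) :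
    K * pfun K z i ≤ 4 / (K + 2) := by
  have hKR : (2 : ℝ) ≤ K := by exact_mod_cast hK
  have hratio0 : 0 ≤ (1 - z i) / z i := div_nonneg (by linarith [DeltaK.le_one hz i]) (by linarith)
  have hratio : (1 - z i) / z i ≤ ((1 : ℝ) + 1 / 2)⁻¹ := by
    rw [div_le_iff₀ (by linarith)]
    linarith
  have hgeom : ((1 - z i) / z i) ^ K ≤ 2 / (K + 2) := calc
    ((1 - z i) / z i) ^ K ≤ ((1 : ℝ) + 1 / 2)⁻¹ ^ K := pow_le_pow_left₀ hratio0 hratio K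
    _ ≤ ((1 : ℝ) + K * (1 / 2))⁻¹ := inv_one_add_pow_le (by norm_num) K
    _ = 2 / (K + 2) := by field_simp; ring
  have hKdiv : (K : ℝ) / (K - 1) ≤ 2 := by
    rw [div_le_iff₀ (by linarith)]
    linarith
  calc (K : ℝ) * pfun K z i ≤ K * (((1 - z i) / z i) ^ K / (K - 1)) :=
        mul_le_mul_of_nonneg_left (DeltaK.pfun_le hz hK (by linarith)) (by positivity)
    _ = K / (K - 1) * ((1 - z i) / z i) ^ K := by ring
    _ ≤ 2 * (2 / (K + 2)) := mul_le_mul hKdiv hgeom (pow_nonneg hratio0 K) zero_le_two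
    _ = 4 / (K + 2) := by ring

theorem neg_le_mul_pfun_mul_remainderFactor (hz : z ∈ DeltaK K) (hK : 2 ≤ K) {m S : ℝ}
    (hm2 : 2 ≤ m) (hm3 : m ≤ 3) (hS0 : 0 ≤ S) (hSK : S ≤ K) (i : Fin K) :
    -(2 / (K + 2)) ≤ S * (pfun K z i * remainderFactor m (z i)) := by
  have hp := DeltaK.pfun_nonneg hz i
  rcases le_or_gt 0 (remainderFactor m (z i)) with h | h
  · exact (neg_nonpos.2 (by positivity)).trans (mul_nonneg hS0 (mul_nonneg hp h))
  have hi := three_fifths_lt_of_remainderFactor_neg hm2 (hz.1 i) h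
  calc -(2 / ((K : ℝ) + 2)) = 4 / (K + 2) * -(1 / 2) := by ring
    _ ≤ S * pfun K z i * -(1 / 2) := mul_le_mul_of_nonpos_right
        ((mul_le_mul_of_nonneg_right hSK hp).trans (DeltaK.natCast_mul_pfun_le hz hK hi.le))
        (by norm_num)
    _ ≤ S * pfun K z i * remainderFactor m (z i) := mul_le_mul_of_nonneg_left
        (neg_half_le_remainderFactor hm2 hm3 (hz.1 i) (DeltaK.le_one hz i)) (mul_nonneg hS0 hp)
    _ = S * (pfun K z i * remainderFactor m (z i)) := mul_assoc _ _ _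

theorem remainder_ge (hz : z ∈ DeltaK K) (hK : 2 ≤ K) {m : ℝ} (hm2 : 2 ≤ m) (hm3 : m ≤ 3) :
    -(1 / (2 * (K + 1)) + 2 / (K + 2)) ≤
      ∑ i, (1 - z i) ^ (K + 1) * remainderFactor m (z i)
        + (∑ j, z j * rfun K (z j)) * ∑ i, pfun K z i * remainderFactor m (z i) := by
  have : Nonempty (Fin K) := ⟨⟨0, by omega⟩⟩
  obtain ⟨i₀, hi₀⟩ := Finite.exists_max z
  have hφ : ∀ i, i ≠ i₀ → 0 ≤ remainderFactor m (z i) := fun i hi =>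
    remainderFactor_nonneg hm2 (hz.1 i)
      (by linarith [DeltaK.add_le_one hz hi, hi₀ i, three_fifths_lt_exp_neg_half])
  have hfirst := single_le_sum_of_nonneg_of_ne i₀
    (f := fun i => (1 - z i) ^ (K + 1) * remainderFactor m (z i))
    fun i hi => mul_nonneg (pow_nonneg (by linarith [DeltaK.le_one hz i]) _) (hφ i hi)
  have hsecond := single_le_sum_of_nonneg_of_ne i₀
    (f := fun i => pfun K z i * remainderFactor m (z i))
    fun i hi => mul_nonneg (DeltaK.pfun_nonneg hz i) (hφ i hi)
  have hS0 := DeltaK.sum_mul_rfun_nonneg hz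
  have h₀ := neg_le_pow_mul_remainderFactor hm2 hm3 (hz.1 i₀) (DeltaK.le_one hz i₀) K
  have h₀' := neg_le_mul_pfun_mul_remainderFactor hz hK hm2 hm3 hS0
    (DeltaK.sum_mul_rfun_le hz) i₀
  linarith [mul_le_mul_of_nonneg_left hsecond hS0]

end DeltaK

/-- For every `u ∈ [0,1]`, `1 − u − u·r(u) = (1−u)^{K+1}`.  Moreover, for
every real `2 < m < 3`, integer `K ≥ 2`, and `z ∈ ∇_K`, the remainder `R_{K,m}(z)`
satisfies `R_{K,m}(z) ≥ −(1+2e²)/(2(K+1))`. -/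
theorem stmt11 (K : ℕ) (hK : 2 ≤ K) :
    (∀ u ∈ Set.Icc (0 : ℝ) 1, 1 - u - u * rfun K u = (1 - u) ^ (K + 1)) ∧
    (∀ (m : ℝ), 2 < m → m < 3 → ∀ z ∈ NablaK K,
      -((1 + 2 * Real.exp 2) / (2 * ((K : ℝ) + 1))) ≤
        (∑ i, (1 - z i - z i * rfun K (z i)) * z i * (1 - (m / 2) * z i ^ (m - 2)))
        + (∑ j, z j * rfun K (z j))
            * ∑ i, pfun K z i * z i * (1 - (m / 2) * z i ^ (m - 2))) := by
  refine ⟨fun u _ => one_sub_sub_mul_rfun K u, fun m hm2 hm3 z hz => ?_⟩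
  have hconst : 2 / ((K : ℝ) + 2) ≤ exp 2 / (K + 1) := by
    have : (2 : ℝ) ≤ exp 2 := by linarith [add_one_le_exp (2 : ℝ)]
    gcongr
    linarith
  have hbound : -((1 + 2 * exp 2) / (2 * ((K : ℝ) + 1))) ≤ -(1 / (2 * (K + 1)) + 2 / (K + 2)) := by
    have : (1 + 2 * exp 2) / (2 * ((K : ℝ) + 1)) = 1 / (2 * (K + 1)) + exp 2 / (K + 1) := by
      field_simp
    linarith
  simp only [one_sub_sub_mul_rfun, mul_assoc]
  exact hbound.trans (DeltaK.remainder_ge hz.1 hK hm2.le hm3.le)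
end

section
/- The power sums separate the points of the Kingman simplex: if z, z′ ∈ ∇̄_∞ satisfy φ_m(z) = φ_m(z′) for every integer m ≥ 2, then z = z′. (This is the separation property underlying the density in C(∇̄_∞) of the algebra generated by 1 and φ_2, φ_3, …, via the Stone–Weierstrass theorem.) -/
open Finset

/-! For a nonnegative nonincreasing summable sequence the largest term is read off the power
sums: `z₀^(m+1) ≤ φ_{m+1}(z) = φ_{m+1}(z') ≤ z'₀^m ∑ z'` for all `m` forces `z₀ ≤ z'₀`, and
symmetrically. Removing the equal first terms leaves two sequences of the same kind with equal
power sums, so all terms agree by induction. -/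

open Filter

lemma le_of_eventually_pow_succ_le_mul_pow {a b C : ℝ} (hb : 0 ≤ b)
    (h : ∀ᶠ n in atTop, a ^ (n + 1) ≤ C * b ^ n) : a ≤ b := by
  by_contra! hba
  have ha : 0 < a := hb.trans_lt hba
  have hlim : Tendsto (fun n : ℕ => C * (b / a) ^ n) atTop (nhds 0) := by
    simpa using (tendsto_pow_atTop_nhds_zero_of_lt_one (div_nonneg hb ha.le)
      ((div_lt_one ha).2 hba)).const_mul C
  have hle : ∀ᶠ n in atTop, a ≤ C * (b / a) ^ n := h.mono fun n hn => by
    rw [div_pow, mul_div_assoc', le_div_iff₀ (pow_pos ha n), ← pow_succ']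
    exact hn
  exact ha.not_ge (ge_of_tendsto hlim hle)

section Antitone

variable {z z' : ℕ → ℝ}

lemma pow_succ_le_head_pow_mul (hz0 : 0 ≤ z) (hanti : Antitone z) (m i : ℕ) :
    z i ^ (m + 1) ≤ z 0 ^ m * z i := by
  rw [pow_succ]
  exact mul_le_mul_of_nonneg_right (pow_le_pow_left₀ (hz0 i) (hanti i.zero_le) m) (hz0 i)

lemma summable_pow_succ_of_antitone (hz0 : 0 ≤ z) (hanti : Antitone z) (hs : Summable z)
    (m : ℕ) : Summable fun i => z i ^ (m + 1) :=
  (hs.mul_left _).of_nonneg_of_le (fun i => pow_nonneg (hz0 i) _)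
    (pow_succ_le_head_pow_mul hz0 hanti m)

lemma tsum_pow_succ_le_of_antitone (hz0 : 0 ≤ z) (hanti : Antitone z) (hs : Summable z)
    (m : ℕ) : ∑' i, z i ^ (m + 1) ≤ z 0 ^ m * ∑' i, z i := by
  rw [← tsum_mul_left]
  exact (summable_pow_succ_of_antitone hz0 hanti hs m).tsum_le_tsum
    (pow_succ_le_head_pow_mul hz0 hanti m) (hs.mul_left _)

section PowerSums

variable (hz0 : 0 ≤ z) (hanti : Antitone z) (hs : Summable z)
  (hz'0 : 0 ≤ z') (hanti' : Antitone z') (hs' : Summable z')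
  (h : ∀ m : ℕ, 2 ≤ m → ∑' i, z i ^ m = ∑' i, z' i ^ m)
include hz0 hanti hs hz'0 hanti' hs' h

lemma head_le_of_tsum_pow_eq : z 0 ≤ z' 0 := by
  refine le_of_eventually_pow_succ_le_mul_pow (hz'0 0) (C := ∑' i, z' i) <|
    eventually_atTop.2 ⟨1, fun n hn => ?_⟩
  calc z 0 ^ (n + 1) ≤ ∑' i, z i ^ (n + 1) :=
        (summable_pow_succ_of_antitone hz0 hanti hs n).le_tsum 0
          fun i _ => pow_nonneg (hz0 i) _
    _ = ∑' i, z' i ^ (n + 1) := h _ (by omega)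
    _ ≤ z' 0 ^ n * ∑' i, z' i := tsum_pow_succ_le_of_antitone hz'0 hanti' hs' n
    _ = _ := mul_comm _ _

lemma head_eq_of_tsum_pow_eq : z 0 = z' 0 :=
  (head_le_of_tsum_pow_eq hz0 hanti hs hz'0 hanti' hs' h).antisymm
    (head_le_of_tsum_pow_eq hz'0 hanti' hs' hz0 hanti hs fun m hm => (h m hm).symm)

lemma tsum_pow_tail_eq_of_tsum_pow_eq (m : ℕ) (hm : 2 ≤ m) :
    ∑' i, z (i + 1) ^ m = ∑' i, z' (i + 1) ^ m := by
  obtain ⟨k, rfl⟩ : ∃ k, m = k + 1 := ⟨m - 1, by omega⟩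
  have hsum := h _ hm
  rw [(summable_pow_succ_of_antitone hz0 hanti hs k).tsum_eq_zero_add,
    (summable_pow_succ_of_antitone hz'0 hanti' hs' k).tsum_eq_zero_add,
    head_eq_of_tsum_pow_eq hz0 hanti hs hz'0 hanti' hs' h] at hsum
  exact add_left_cancel hsum

end PowerSums

theorem eq_of_tsum_pow_eq (hz0 : 0 ≤ z) (hanti : Antitone z) (hs : Summable z)
    (hz'0 : 0 ≤ z') (hanti' : Antitone z') (hs' : Summable z')
    (h : ∀ m : ℕ, 2 ≤ m → ∑' i, z i ^ m = ∑' i, z' i ^ m) : z = z' := by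
  funext n
  induction n generalizing z z' with
  | zero => exact head_eq_of_tsum_pow_eq hz0 hanti hs hz'0 hanti' hs' h
  | succ n ih =>
    have hshift : Monotone (· + 1 : ℕ → ℕ) := fun _ _ => Nat.succ_le_succ
    exact ih (fun i => hz0 (i + 1)) (hanti.comp_monotone hshift)
      (hs.comp_injective (add_left_injective 1))
      (fun i => hz'0 (i + 1)) (hanti'.comp_monotone hshift)
      (hs'.comp_injective (add_left_injective 1))
      (tsum_pow_tail_eq_of_tsum_pow_eq hz0 hanti hs hz'0 hanti' hs' h)

end Antitone

/-- The power sums separate the points of the Kingman simplex: if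
`z, z′ ∈ ∇̄_∞` satisfy `φ_m(z) = φ_m(z′)` for every integer `m ≥ 2`, then `z = z′`. -/
theorem stmt19 (z z' : ℕ → ℝ) (hz : z ∈ KingmanSimplex) (hz' : z' ∈ KingmanSimplex)
    (h : ∀ m : ℕ, 2 ≤ m → (∑' i, z i ^ m) = (∑' i, z' i ^ m)) :
    z = z' := by
  obtain ⟨hz0, -, hanti, hs, -⟩ := hz
  obtain ⟨hz'0, -, hanti', hs', -⟩ := hz'
  exact eq_of_tsum_pow_eq hz0 (fun i j hij => hanti i j hij) hs
    hz'0 (fun i j hij => hanti' i j hij) hs' h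
end
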